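/- arXiv:math/0602036 — 4 statements merged into one kernel-verified Lean document; each statement's English description precedes it below -/
import Mathlib

section
/- Let H be a subgroup of the group of orientation-preserving homeomorphisms of [0,1] and let A = (a,b) be an orbital of H, i.e., a connected component of the support of the action of H. Then for any c, d ∈ A with c < d there exists g ∈ H with g(c) > d. -/
/-- The support of a map of the line: points it moves. -/
def Supp (f : ℝ → ℝ) : Set ℝ := {x | f x ≠ x}

/-- `A` is an orbital of `f`: a connected component of the support of `f`. -/
def IsOrbital (f : ℝ → ℝ) (A : Set ℝ) : Prop :=
  ∃ x ∈ Supp f, A = connectedComponentIn (Supp f) x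

/-- An orientation-preserving homeomorphism of `[0,1]`, encoded as a strictly
increasing bijection of `ℝ` fixing every point outside `(0,1)`. -/
def Homeo01 (f : Equiv.Perm ℝ) : Prop :=
  StrictMono f ∧ ∀ x ∉ Set.Ioo (0:ℝ) 1, f x = x

/-- `f` is affine in a neighbourhood of `x`. -/
def LocallyAffineAt (f : ℝ → ℝ) (x : ℝ) : Prop :=
  ∃ ε > 0, ∃ m b : ℝ, ∀ y : ℝ, |y - x| < ε → f y = m * y + b

/-- Piecewise linear with finitely many breakpoints. -/
def IsPL (f : ℝ → ℝ) : Prop := {x | ¬ LocallyAffineAt f x}.Finite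

/-- Membership in `PL₊(I)`. -/
def PLHomeo (f : Equiv.Perm ℝ) : Prop := Homeo01 f ∧ IsPL f

/-- Support of the action of a subgroup. -/
def GSupp (G : Subgroup (Equiv.Perm ℝ)) : Set ℝ := {x | ∃ g ∈ G, g x ≠ x}

/-- An orbital of a subgroup: a component of the support of its action. -/
def IsGroupOrbital (G : Subgroup (Equiv.Perm ℝ)) (A : Set ℝ) : Prop :=
  ∃ x ∈ GSupp G, A = connectedComponentIn (GSupp G) x

/-- `b` is a breakpoint of `f`: one-sided derivatives exist but differ. -/
def Breakpoint (f : ℝ → ℝ) (b : ℝ) : Prop :=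
  b ∈ Set.Ioo (0:ℝ) 1 ∧
  DifferentiableWithinAt ℝ f (Set.Iio b) b ∧
  DifferentiableWithinAt ℝ f (Set.Ioi b) b ∧
  derivWithin f (Set.Iio b) b ≠ derivWithin f (Set.Ioi b) b

/-- `G` admits a transition chain of length two. -/
def HasTransitionChain2 (G : Subgroup (Equiv.Perm ℝ)) : Prop :=
  ∃ g ∈ G, ∃ h ∈ G, ∃ a₁ b₁ a₂ b₂ : ℝ,
    IsOrbital g (Set.Ioo a₁ a₂) ∧ IsOrbital h (Set.Ioo b₁ b₂) ∧
    a₁ < b₁ ∧ b₁ < a₂ ∧ a₂ < b₂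

/-- A tower of the subgroup `G`: a set of signed orbitals `(A, g)` whose orbitals
form a chain under inclusion, with exactly one signature per orbital. -/
def IsTower (G : Subgroup (Equiv.Perm ℝ)) (T : Set (Set ℝ × Equiv.Perm ℝ)) : Prop :=
  (∀ p ∈ T, p.2 ∈ G ∧ IsOrbital p.2 p.1) ∧
  (∀ p ∈ T, ∀ q ∈ T, p.1 ⊆ q.1 ∨ q.1 ⊆ p.1) ∧
  (∀ p ∈ T, ∀ q ∈ T, p.1 = q.1 → p = q)

/-- The depth of `G` equals `n`: there is a tower of height `n` and every tower
is finite with height at most `n`. -/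
def DepthEq (G : Subgroup (Equiv.Perm ℝ)) (n : ℕ) : Prop :=
  (∃ T, IsTower G T ∧ T.Finite ∧ T.ncard = n) ∧
  ∀ T, IsTower G T → T.Finite ∧ T.ncard ≤ n

/-!
If every `g c` stayed below `d`, the supremum `t` of the orbit of `c` would lie in `[c, d] ⊆ A`.
But the supremum of an orbit of a group of increasing bijections is fixed by the whole group: if
`t < h t`, then `h⁻¹ t < t`, so some `g c` exceeds `h⁻¹ t` and `h (g c) > t` lies in the orbit.
A common fixed point is outside the support, contradicting `t ∈ A`.
-/

open MulAction

section OrderedPermGroup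

variable {α : Type*} [LinearOrder α] {G : Subgroup (Equiv.Perm α)}

theorem Subgroup.apply_le_of_isLUB_orbit (hG : ∀ g ∈ G, StrictMono g) {c t : α}
    (ht : IsLUB (orbit G c) t) {g : Equiv.Perm α} (hg : g ∈ G) : g t ≤ t := by
  by_contra! hlt
  have hinv : g⁻¹ t < t := by
    rwa [← (hG g hg).lt_iff_lt, Equiv.Perm.coe_inv, Equiv.apply_symm_apply]
  obtain ⟨_, ⟨k, rfl⟩, hk, -⟩ := ht.exists_between hinv
  have hmem : g (k • c) ∈ orbit G c := ⟨⟨g, hg⟩ * k, mul_smul _ _ _⟩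
  have hgt : t < g (k • c) := by
    simpa only [Equiv.Perm.coe_inv, Equiv.apply_symm_apply] using (hG g hg) hk
  exact (ht.1 hmem).not_gt hgt

theorem Subgroup.apply_eq_of_isLUB_orbit (hG : ∀ g ∈ G, StrictMono g) {c t : α}
    (ht : IsLUB (orbit G c) t) {g : Equiv.Perm α} (hg : g ∈ G) : g t = t := by
  refine le_antisymm (Subgroup.apply_le_of_isLUB_orbit hG ht hg) ?_
  have hinv := Subgroup.apply_le_of_isLUB_orbit hG ht (G.inv_mem hg)
  calc t = g (g⁻¹ t) := (g.apply_symm_apply t).symm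
    _ ≤ g t := (hG g hg).monotone hinv

end OrderedPermGroup

theorem IsGroupOrbital.subset_gSupp {G : Subgroup (Equiv.Perm ℝ)} {A : Set ℝ}
    (hA : IsGroupOrbital G A) : A ⊆ GSupp G := by
  obtain ⟨x, -, rfl⟩ := hA
  exact connectedComponentIn_subset _ _

theorem IsGroupOrbital.ordConnected {G : Subgroup (Equiv.Perm ℝ)} {A : Set ℝ}
    (hA : IsGroupOrbital G A) : A.OrdConnected := by
  obtain ⟨x, -, rfl⟩ := hA
  exact isPreconnected_connectedComponentIn.ordConnected

theorem stmt6_general (H : Subgroup (Equiv.Perm ℝ)) (hH : ∀ g ∈ H, Homeo01 g)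
    (A : Set ℝ) (hA : IsGroupOrbital H A) (c d : ℝ) (hc : c ∈ A) (hd : d ∈ A) :
    ∃ g ∈ H, d < g c := by
  by_contra! hbound
  have hub : d ∈ upperBounds (orbit H c) := by
    rintro _ ⟨g, rfl⟩
    exact hbound g g.2
  have hne : (orbit H c).Nonempty := ⟨c, mem_orbit_self c⟩
  set t := sSup (orbit H c)
  have hlub : IsLUB (orbit H c) t := isLUB_csSup hne ⟨d, hub⟩
  have htA : t ∈ A :=
    hA.ordConnected.out hc hd ⟨hlub.1 (mem_orbit_self c), hlub.2 hub⟩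
  obtain ⟨h, hh, hmoved⟩ := hA.subset_gSupp htA
  exact hmoved (Subgroup.apply_eq_of_isLUB_orbit (fun g hg => (hH g hg).1) hlub hh)

theorem stmt6 (H : Subgroup (Equiv.Perm ℝ)) (hH : ∀ g ∈ H, Homeo01 g)
    (hfin : ∀ g ∈ H, {A : Set ℝ | IsOrbital ⇑g A}.Finite)
    (A : Set ℝ) (hA : IsGroupOrbital H A) (c d : ℝ) (hc : c ∈ A) (hd : d ∈ A)
    (hcd : c < d) : ∃ g ∈ H, d < g c :=
  stmt6_general H hH A hA c d hc hd
end

section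
/- If G is a subgroup of PL₊(I) that does not admit a transition chain of length two, then any two orbitals A of g ∈ G and B of h ∈ G that intersect satisfy: closure(A) ⊆ B, or closure(B) ⊆ A, or A = B. -/
/-!
Orbitals of elements of `PL₊(I)` are open intervals with fixed endpoints, so two intersecting
orbitals with four distinct endpoints are either nested or a transition chain. The remaining case
is a shared endpoint `c`: say `h` has the orbital between `p` and `c`, while `g` fixes `c` and
moves `p`. For `k = g` or `k = g⁻¹`, `k⁻¹ p` lies in that orbital, so `⁅k, h⁆` moves `p`.
On each side of `c`, elements fixing `c` agree near `c` with linear maps centred at `c`, which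
commute; hence `⁅k, h⁆` is the identity near `c`, and its orbital through `p` ends strictly
before `c`, forming a transition chain with the orbital of `h`.
-/

open Set Filter Topology
open scoped commutatorElement

lemma Homeo01.continuous {f : Equiv.Perm ℝ} (hf : Homeo01 f) : Continuous f :=
  hf.1.monotone.continuous_of_surjective f.surjective

lemma Homeo01.inv {f : Equiv.Perm ℝ} (hf : Homeo01 f) : Homeo01 f⁻¹ := by
  refine ⟨fun x y hxy => ?_, fun x hx => Equiv.Perm.inv_eq_iff_eq.2 (hf.2 x hx).symm⟩
  rw [← hf.1.lt_iff_lt]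
  simpa using hxy

lemma Homeo01.isOpen_supp {f : Equiv.Perm ℝ} (hf : Homeo01 f) : IsOpen (Supp f) :=
  isOpen_ne_fun hf.continuous continuous_id

lemma Homeo01.tendsto_nhdsWithin {f : Equiv.Perm ℝ} (hf : Homeo01 f) {c : ℝ} (hc : f c = c)
    {s : Set ℝ} (hs : s = Iio c ∨ s = Ioi c) : Tendsto f (𝓝[s] c) (𝓝[s] c) := by
  have hmaps : MapsTo f s s := by
    rcases hs with rfl | rfl <;> exact fun x hx => hc ▸ hf.1 hx
  simpa [hc] using (hf.continuous.continuousWithinAt (x := c)).tendsto_nhdsWithin hmaps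

lemma Homeo01.apply_mem_uIoo_or_inv_apply_mem_uIoo {f : Equiv.Perm ℝ} (hf : Homeo01 f)
    {c p : ℝ} (hc : f c = c) (hp : f p ≠ p) : f p ∈ uIoo p c ∨ f⁻¹ p ∈ uIoo p c := by
  have hinv : StrictMono ⇑f⁻¹ := hf.inv.1
  have hc' : f⁻¹ c = c := Equiv.Perm.inv_eq_iff_eq.2 hc.symm
  have hne : p ≠ c := fun h => hp (h ▸ hc)
  rcases lt_or_gt_of_ne hp with hlt | hgt <;> rcases lt_or_gt_of_ne hne with hpc | hpc
  · exact Or.inr (mem_uIoo_of_lt (by simpa using hinv hlt) (hc' ▸ hinv hpc))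
  · exact Or.inl (mem_uIoo_of_gt (hc ▸ hf.1 hpc) hlt)
  · exact Or.inl (mem_uIoo_of_lt hgt (hc ▸ hf.1 hpc))
  · exact Or.inr (mem_uIoo_of_gt (hc' ▸ hinv hpc) (by simpa using hinv hgt))

lemma closure_inter_subset_connectedComponentIn {α : Type*} [TopologicalSpace α] {S : Set α}
    {x : α} : closure (connectedComponentIn S x) ∩ S ⊆ connectedComponentIn S x := by
  rintro y ⟨hy, hyS⟩
  by_cases hx : x ∈ S
  · have hpre : IsPreconnected (insert y (connectedComponentIn S x)) :=
      isPreconnected_connectedComponentIn.subset_closure (subset_insert _ _)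
        (insert_subset hy subset_closure)
    exact hpre.subset_connectedComponentIn (mem_insert_of_mem _ (mem_connectedComponentIn hx))
      (insert_subset hyS (connectedComponentIn_subset _ _)) (mem_insert _ _)
  · rw [connectedComponentIn_eq_empty hx, closure_empty] at hy
    exact hy.elim

lemma IsOrbital.subset_supp {f : ℝ → ℝ} {A : Set ℝ} (h : IsOrbital f A) : A ⊆ Supp f := by
  obtain ⟨x, -, rfl⟩ := h
  exact connectedComponentIn_subset _ _

lemma IsOrbital.fixes_endpoints {f : ℝ → ℝ} {a b : ℝ} (hab : a < b) (h : IsOrbital f (Ioo a b)) :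
    f a = a ∧ f b = b := by
  obtain ⟨x, -, hA⟩ := h
  have key : ∀ y ∈ Icc a b, y ∉ Ioo a b → f y = y := fun y hy hyA => by
    by_contra hne
    rw [← closure_Ioo hab.ne, hA] at hy
    exact hyA (hA ▸ closure_inter_subset_connectedComponentIn ⟨hy, hne⟩)
  exact ⟨key a (left_mem_Icc.2 hab.le) (by simp), key b (right_mem_Icc.2 hab.le) (by simp)⟩

lemma IsOrbital.eq_Ioo {f : Equiv.Perm ℝ} (hf : Homeo01 f) {A : Set ℝ} (h : IsOrbital f A) :
    ∃ a b, a < b ∧ A = Ioo a b := by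
  obtain ⟨x, hx, rfl⟩ := h
  set A := connectedComponentIn (Supp f) x
  have hconn : IsConnected A := isConnected_connectedComponentIn_iff.2 hx
  have hopen : IsOpen A := hf.isOpen_supp.connectedComponentIn
  have hbdd : A ⊆ Ioo 0 1 := fun y hy => by
    by_contra hy'
    exact connectedComponentIn_subset _ _ hy (hf.2 y hy')
  have hbb : BddBelow A := bddBelow_Ioo.mono hbdd
  have hba : BddAbove A := bddAbove_Ioo.mono hbdd
  have hA : A = Ioo (sInf A) (sSup A) := by
    refine Subset.antisymm (fun y hy => ⟨?_, ?_⟩) (hconn.Ioo_csInf_csSup_subset hbb hba)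
    · obtain ⟨z, hzy, hz⟩ := Filter.Eventually.exists_lt (hopen.mem_nhds hy)
      exact (csInf_le hbb hz).trans_lt hzy
    · obtain ⟨z, hzy, hz⟩ := Filter.Eventually.exists_gt (hopen.mem_nhds hy)
      exact hzy.trans_le (le_csSup hba hz)
  obtain ⟨y, hy⟩ := hconn.nonempty
  rw [hA] at hy
  exact ⟨_, _, hy.1.trans hy.2, hA⟩

lemma exists_orbital_mem {q : Equiv.Perm ℝ} (hq : Homeo01 q) {p : ℝ} (hp : q p ≠ p) :
    ∃ e₁ e₂, IsOrbital q (Ioo e₁ e₂) ∧ p ∈ Ioo e₁ e₂ := by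
  have hE : IsOrbital q (connectedComponentIn (Supp q) p) := ⟨p, hp, rfl⟩
  obtain ⟨e₁, e₂, -, hEq⟩ := hE.eq_Ioo hq
  exact ⟨e₁, e₂, hEq ▸ hE, hEq ▸ mem_connectedComponentIn hp⟩

lemma LocallyAffineAt.eventuallyEq {f : ℝ → ℝ} {x : ℝ} (h : LocallyAffineAt f x) :
    ∃ m b : ℝ, f =ᶠ[𝓝 x] fun y => m * y + b := by
  obtain ⟨ε, hε, m, b, hf⟩ := h
  refine ⟨m, b, ?_⟩
  filter_upwards [Metric.ball_mem_nhds x hε] with y hy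
  exact hf y (by rwa [Metric.mem_ball, Real.dist_eq] at hy)

lemma exists_affine_of_forall_locallyAffineAt {f : ℝ → ℝ} {U : Set ℝ} (hU : IsOpen U)
    (hU' : IsPreconnected U) (h : ∀ x ∈ U, LocallyAffineAt f x) :
    ∃ m b : ℝ, ∀ x ∈ U, f x = m * x + b := by
  rcases U.eq_empty_or_nonempty with rfl | ⟨x₀, hx₀⟩
  · exact ⟨0, 0, by simp⟩
  have hloc : ∀ x ∈ U, ∃ m, HasDerivAt f m x ∧ deriv f =ᶠ[𝓝 x] fun _ => m := by
    intro x hx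
    obtain ⟨m, b, hfx⟩ := (h x hx).eventuallyEq
    have hd : ∀ y, HasDerivAt (fun y => m * y + b) m y := fun y => by
      simpa using ((hasDerivAt_id y).const_mul m).add_const b
    exact ⟨m, (hd x).congr_of_eventuallyEq hfx, hfx.deriv.trans (.of_forall fun y => (hd y).deriv)⟩
  have hdiff : DifferentiableOn ℝ f U := fun x hx =>
    (hloc x hx).choose_spec.1.differentiableAt.differentiableWithinAt
  have hgerm : ∀ y ∈ U, (deriv f : Germ (𝓝 y) ℝ).IsConstant := fun y hy =>
    show ∃ m : ℝ, deriv f =ᶠ[𝓝 y] fun _ => m from ⟨_, (hloc y hy).choose_spec.2⟩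
  have hconst : EqOn (deriv f) (deriv fun x => deriv f x₀ * x) U := fun x hx => by
    simpa using eq_of_germ_isConstant_on hgerm hU' hx hx₀
  obtain ⟨b, hb⟩ := hU.exists_eq_add_of_deriv_eq hU' hdiff
    ((differentiable_id.const_mul _).differentiableOn) hconst
  exact ⟨deriv f x₀, b, hb⟩

lemma IsPL.eventually_locallyAffineAt {f : ℝ → ℝ} (hf : IsPL f) (c : ℝ) :
    ∀ᶠ x in 𝓝[≠] c, LocallyAffineAt f x := by
  have hc : ({x | ¬ LocallyAffineAt f x} \ {c})ᶜ ∈ 𝓝 c :=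
    hf.sdiff.isClosed.compl_mem_nhds (by simp)
  filter_upwards [mem_nhdsWithin_of_mem_nhds hc, self_mem_nhdsWithin] with x h1 h2
  by_contra h
  exact h1 ⟨h, h2⟩

lemma IsPL.exists_affine_nhdsWithin {f : ℝ → ℝ} (hf : IsPL f) {c : ℝ} {s : Set ℝ}
    (hs : s = Iio c ∨ s = Ioi c) : ∃ m b : ℝ, ∀ᶠ x in 𝓝[s] c, f x = m * x + b := by
  have hev : ∀ᶠ x in 𝓝[s] c, LocallyAffineAt f x :=
    (hf.eventually_locallyAffineAt c).filter_mono <| nhdsWithin_mono _ <| by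
      rcases hs with rfl | rfl
      exacts [fun x hx => hx.ne, fun x hx => hx.ne']
  obtain ⟨u, v, huv, hsub⟩ :
      ∃ u v, Ioo u v ∈ 𝓝[s] c ∧ ∀ x ∈ Ioo u v, LocallyAffineAt f x := by
    rcases hs with rfl | rfl
    · obtain ⟨u, hu, hsub⟩ := mem_nhdsLT_iff_exists_Ioo_subset.1 hev
      exact ⟨u, c, Ioo_mem_nhdsLT hu, hsub⟩
    · obtain ⟨v, hv, hsub⟩ := mem_nhdsGT_iff_exists_Ioo_subset.1 hev
      exact ⟨c, v, Ioo_mem_nhdsGT hv, hsub⟩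
  obtain ⟨m, b, haff⟩ := exists_affine_of_forall_locallyAffineAt isOpen_Ioo isPreconnected_Ioo hsub
  exact ⟨m, b, mem_of_superset huv haff⟩

lemma PLHomeo.exists_slope {f : Equiv.Perm ℝ} (hf : PLHomeo f) {c : ℝ} (hc : f c = c)
    {s : Set ℝ} (hs : s = Iio c ∨ s = Ioi c) :
    ∃ m : ℝ, ∀ᶠ x in 𝓝[s] c, f x = c + m * (x - c) := by
  obtain ⟨m, b, hmb⟩ := hf.2.exists_affine_nhdsWithin hs
  have : (𝓝[s] c).NeBot := by rcases hs with rfl | rfl <;> infer_instance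
  have hcb : m * c + b = c := by
    have hcont : Tendsto f (𝓝[s] c) (𝓝 c) := by
      simpa only [hc] using (hf.1.continuous.tendsto c).mono_left nhdsWithin_le_nhds
    refine tendsto_nhds_unique ?_ hcont
    refine Tendsto.congr' (hmb.mono fun x hx => hx.symm) ?_
    exact ((continuous_const.mul continuous_id).add continuous_const).continuousWithinAt
  exact ⟨m, hmb.mono fun x hx => by rw [hx]; linear_combination hcb⟩

lemma eventually_commutator_apply_eq_self_of_linear_germs {l : Filter ℝ} {f g : Equiv.Perm ℝ}
    {c m n : ℝ} (hf : Tendsto f l l) (hg : Tendsto g l l)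
    (hf' : Tendsto ⇑f⁻¹ l l) (hg' : Tendsto ⇑g⁻¹ l l)
    (hfm : ∀ᶠ x in l, f x = c + m * (x - c)) (hgn : ∀ᶠ x in l, g x = c + n * (x - c)) :
    ∀ᶠ x in l, ⁅f, g⁆ x = x := by
  have hcomm : ∀ᶠ y in l, f (g y) = g (f y) := by
    filter_upwards [hg.eventually hfm, hf.eventually hgn, hfm, hgn] with y h1 h2 h3 h4
    rw [h1, h2, h3, h4]
    ring
  filter_upwards [(hf'.comp hg').eventually hcomm] with x hx
  simpa [commutatorElement_def] using hx

lemma PLHomeo.eventually_commutator_apply_eq_self {f g : Equiv.Perm ℝ} (hf : PLHomeo f)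
    (hg : PLHomeo g) {c : ℝ} (hfc : f c = c) (hgc : g c = c) :
    ∀ᶠ x in 𝓝[≠] c, ⁅f, g⁆ x = x := by
  have hside : ∀ s, (s = Iio c ∨ s = Ioi c) → ∀ᶠ x in 𝓝[s] c, ⁅f, g⁆ x = x := by
    intro s hs
    obtain ⟨m, hm⟩ := hf.exists_slope hfc hs
    obtain ⟨n, hn⟩ := hg.exists_slope hgc hs
    exact eventually_commutator_apply_eq_self_of_linear_germs (hf.1.tendsto_nhdsWithin hfc hs)
      (hg.1.tendsto_nhdsWithin hgc hs)
      (hf.1.inv.tendsto_nhdsWithin (Equiv.Perm.inv_eq_iff_eq.2 hfc.symm) hs)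
      (hg.1.inv.tendsto_nhdsWithin (Equiv.Perm.inv_eq_iff_eq.2 hgc.symm) hs) hm hn
  rw [← nhdsLT_sup_nhdsGT, eventually_sup]
  exact ⟨hside _ (Or.inl rfl), hside _ (Or.inr rfl)⟩

lemma commutator_apply_ne_self {k h : Equiv.Perm ℝ} {p : ℝ} (hp : h p = p)
    (hk : h (k⁻¹ p) ≠ k⁻¹ p) : ⁅k, h⁆ p ≠ p := by
  intro heq
  refine hk (Equiv.Perm.eq_inv_iff_eq.2 ?_)
  rwa [commutatorElement_def, Equiv.Perm.mul_apply, Equiv.Perm.mul_apply, Equiv.Perm.mul_apply,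
    Equiv.Perm.inv_eq_iff_eq.2 hp.symm] at heq

lemma hasTransitionChain2_of_orbital_uIoo {G : Subgroup (Equiv.Perm ℝ)}
    (hG : ∀ g ∈ G, PLHomeo g) {g h : Equiv.Perm ℝ} (hg : g ∈ G) (hh : h ∈ G) {p c : ℝ}
    (hX : IsOrbital h (uIoo p c)) (hgc : g c = c) (hgp : g p ≠ p) : HasTransitionChain2 G := by
  have hpc : p ≠ c := fun hpc => hgp (hpc ▸ hgc)
  have hhp : h p = p ∧ h c = c := by
    rcases lt_or_gt_of_ne hpc with hlt | hgt
    · exact (uIoo_of_lt hlt ▸ hX).fixes_endpoints hlt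
    · exact ((uIoo_of_gt hgt ▸ hX).fixes_endpoints hgt).symm
  obtain ⟨k, hkG, hkc, hk⟩ : ∃ k ∈ G, k c = c ∧ k⁻¹ p ∈ uIoo p c := by
    rcases (hG g hg).1.apply_mem_uIoo_or_inv_apply_mem_uIoo hgc hgp with hmem | hmem
    · exact ⟨g⁻¹, inv_mem hg, Equiv.Perm.inv_eq_iff_eq.2 hgc.symm, by simpa using hmem⟩
    · exact ⟨g, hg, hgc, hmem⟩
  have hqG : ⁅k, h⁆ ∈ G := by
    simpa only [commutatorElement_def] using
      mul_mem (mul_mem (mul_mem hkG hh) (inv_mem hkG)) (inv_mem hh)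
  have hqp : ⁅k, h⁆ p ≠ p := commutator_apply_ne_self hhp.1 (hX.subset_supp hk)
  have hfix : ∀ᶠ x in 𝓝[≠] c, ⁅k, h⁆ x = x :=
    (hG k hkG).eventually_commutator_apply_eq_self (hG h hh) hkc hhp.2
  obtain ⟨e₁, e₂, hE, hpE⟩ := exists_orbital_mem (hG _ hqG).1 hqp
  have hfixE : ∀ x ∈ Ioo e₁ e₂, ⁅k, h⁆ x ≠ x := fun x hx => hE.subset_supp hx
  rcases lt_or_gt_of_ne hpc with hlt | hgt
  · obtain ⟨x, hqx, hx⟩ := ((hfix.filter_mono (nhdsWithin_mono _ fun x hx => hx.ne)).and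
      (Ioo_mem_nhdsLT hlt)).exists
    have he₂ : e₂ ≤ x := not_lt.1 fun hxe => hfixE x ⟨hpE.1.trans hx.1, hxe⟩ hqx
    exact ⟨_, hqG, h, hh, e₁, p, e₂, c, hE, uIoo_of_lt hlt ▸ hX, hpE.1, hpE.2, he₂.trans_lt hx.2⟩
  · obtain ⟨x, hqx, hx⟩ := ((hfix.filter_mono (nhdsWithin_mono _ fun x hx => hx.ne')).and
      (Ioo_mem_nhdsGT hgt)).exists
    have he₁ : x ≤ e₁ := not_lt.1 fun hxe => hfixE x ⟨hxe, hx.2.trans hpE.2⟩ hqx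
    exact ⟨h, hh, _, hqG, c, e₁, p, e₂, uIoo_of_gt hgt ▸ hX, hE, hx.1.trans_le he₁, hpE.1, hpE.2⟩

theorem stmt7 (G : Subgroup (Equiv.Perm ℝ)) (hG : ∀ g ∈ G, PLHomeo g)
    (hnc : ¬ HasTransitionChain2 G) {g h : Equiv.Perm ℝ} (hg : g ∈ G) (hh : h ∈ G)
    {A B : Set ℝ} (hA : IsOrbital ⇑g A) (hB : IsOrbital ⇑h B) (hAB : (A ∩ B).Nonempty) :
    closure A ⊆ B ∨ closure B ⊆ A ∨ A = B := by
  obtain ⟨a₁, a₂, ha, rfl⟩ := hA.eq_Ioo (hG g hg).1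
  obtain ⟨b₁, b₂, hb, rfl⟩ := hB.eq_Ioo (hG h hh).1
  obtain ⟨x, hxA, hxB⟩ := hAB
  have hga := hA.fixes_endpoints ha
  have hhb := hB.fixes_endpoints hb
  rcases lt_trichotomy a₁ b₁ with h₁ | rfl | h₁ <;>
    rcases lt_trichotomy a₂ b₂ with h₂ | rfl | h₂
  · exact (hnc ⟨g, hg, h, hh, a₁, b₁, a₂, b₂, hA, hB, h₁, hxB.1.trans hxA.2, h₂⟩).elim
  · exact (hnc (hasTransitionChain2_of_orbital_uIoo hG hg hh (by rwa [uIoo_of_lt hb])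
      hga.2 (hA.subset_supp ⟨h₁, hb⟩))).elim
  · exact Or.inr (Or.inl (by rw [closure_Ioo hb.ne]; exact Icc_subset_Ioo h₁ h₂))
  · exact (hnc (hasTransitionChain2_of_orbital_uIoo hG hh hg (by rwa [uIoo_of_gt ha])
      hhb.1 (hB.subset_supp ⟨ha, h₂⟩))).elim
  · exact Or.inr (Or.inr rfl)
  · exact (hnc (hasTransitionChain2_of_orbital_uIoo hG hg hh (by rwa [uIoo_of_gt hb])
      hga.1 (hA.subset_supp ⟨hb, h₂⟩))).elim
  · exact Or.inl (by rw [closure_Ioo ha.ne]; exact Icc_subset_Ioo h₁ h₂)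
  · exact (hnc (hasTransitionChain2_of_orbital_uIoo hG hh hg (by rwa [uIoo_of_lt ha])
      hhb.2 (hB.subset_supp ⟨h₁, ha⟩))).elim
  · exact (hnc ⟨h, hh, g, hg, b₁, a₁, b₂, a₂, hB, hA, h₁, hxA.1.trans hxB.2, h₂⟩).elim
end

section
/- If G is a subgroup of PL₊(I) that does not admit a transition chain of length two, then G is balanced: for every subgroup H ≤ G with orbital A, any element of H having an orbital sharing one end of A (and contained in A) also has an orbital contained in A sharing the other end of A. -/
/-! Two elements of `PL₊(I)` fixing `a` agree with linear maps on a right neighbourhood of `a`,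
so they commute there. Let `h` have the orbital `(a, d)` inside the orbital `(a, b)` of `H` and
suppose `d < b`. Some `k ∈ H` moves `d` into `(a, d)`; the commutator `w = k⁻¹ h k h⁻¹` then moves
`d` (because `h` moves `k d`) but fixes a right neighbourhood of `a`. So the orbital `(r, s)` of `w`
through `d` satisfies `a < r < d < s`, and with `(a, d)` it forms a transition chain of length
two. The other end reduces to this one by conjugating with `x ↦ -x`. -/

open Set Filter Topology Pointwise

theorem notMem_of_Ioo_eq_connectedComponentIn {α : Type*} [ConditionallyCompleteLinearOrder α]
    [TopologicalSpace α] [OrderTopology α] [DenselyOrdered α] {S : Set α} {x p q : α}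
    (hx : x ∈ S) (h : Ioo p q = connectedComponentIn S x) : p ∉ S ∧ q ∉ S := by
  have hxpq : x ∈ Ioo p q := h ▸ mem_connectedComponentIn hx
  have hsub : Ioo p q ⊆ S := h ▸ connectedComponentIn_subset S x
  have hpq : p < q := hxpq.1.trans hxpq.2
  constructor
  · intro hp
    have hIco : Ico p q ⊆ S := fun y hy =>
      (eq_or_lt_of_le hy.1).elim (fun hpy => hpy ▸ hp) fun hpy => hsub ⟨hpy, hy.2⟩
    have := isPreconnected_Ico.subset_connectedComponentIn (Ioo_subset_Ico_self hxpq) hIco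
    exact (lt_irrefl p) (h ▸ this (left_mem_Ico.2 hpq)).1
  · intro hq
    have hIoc : Ioc p q ⊆ S := fun y hy =>
      (eq_or_lt_of_le hy.2).elim (fun hyq => hyq ▸ hq) fun hyq => hsub ⟨hy.1, hyq⟩
    have := isPreconnected_Ioc.subset_connectedComponentIn (Ioo_subset_Ioc_self hxpq) hIoc
    exact (lt_irrefl q) (h ▸ this (right_mem_Ioc.2 hpq)).2

theorem connectedComponentIn_eq_Ioo {S : Set ℝ} (hS : IsOpen S) {x : ℝ} (hx : x ∈ S)
    (hb : BddBelow (connectedComponentIn S x)) (ha : BddAbove (connectedComponentIn S x)) :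
    connectedComponentIn S x =
      Ioo (sInf (connectedComponentIn S x)) (sSup (connectedComponentIn S x)) := by
  set C := connectedComponentIn S x
  have hC : IsOpen C := hS.connectedComponentIn
  refine Subset.antisymm (fun y hy => ⟨?_, ?_⟩)
    (IsConnected.Ioo_csInf_csSup_subset ⟨⟨x, mem_connectedComponentIn hx⟩,
      isPreconnected_connectedComponentIn⟩ hb ha)
  · obtain ⟨l, hly, hl⟩ := exists_Ioc_subset_of_mem_nhds (hC.mem_nhds hy) (exists_lt y)
    obtain ⟨z, hlz, hzy⟩ := exists_between hly
    exact (csInf_le hb (hl ⟨hlz, hzy.le⟩)).trans_lt hzy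
  · obtain ⟨u, hyu, hu⟩ := exists_Ico_subset_of_mem_nhds (hC.mem_nhds hy) (exists_gt y)
    obtain ⟨z, hyz, hzu⟩ := exists_between hyu
    exact hyz.trans_le (le_csSup ha (hu ⟨hyz.le, hzu⟩))

theorem connectedComponentIn_neg {G : Type*} [TopologicalSpace G] [InvolutiveNeg G]
    [ContinuousNeg G] (S : Set G) (x : G) :
    connectedComponentIn (-S) (-x) = -connectedComponentIn S x := by
  by_cases hx : x ∈ S
  · simpa [image_neg_eq_neg] using ((Homeomorph.neg G).image_connectedComponentIn hx).symm
  · rw [connectedComponentIn_eq_empty hx, connectedComponentIn_eq_empty (by simpa using hx),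
      neg_empty]

theorem exists_eq_connectedComponentIn_neg_iff {G : Type*} [TopologicalSpace G]
    [InvolutiveNeg G] [ContinuousNeg G] {S A : Set G} :
    (∃ x ∈ -S, A = connectedComponentIn (-S) x) ↔ ∃ x ∈ S, -A = connectedComponentIn S x := by
  constructor
  · rintro ⟨x, hx, rfl⟩
    exact ⟨-x, hx, by simpa using (connectedComponentIn_neg (-S) x).symm⟩
  · rintro ⟨x, hx, h⟩
    exact ⟨-x, by simpa using hx, by rw [connectedComponentIn_neg, ← h, neg_neg]⟩

theorem LocallyAffineAt.exists_eventually_hasDerivAt {f : ℝ → ℝ} {x : ℝ}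
    (h : LocallyAffineAt f x) : ∃ m, ∀ᶠ y in 𝓝 x, HasDerivAt f m y := by
  obtain ⟨ε, hε, m, c, hf⟩ := h
  have hfx : f =ᶠ[𝓝 x] fun y => m * y + c :=
    eventually_of_mem (Metric.ball_mem_nhds x hε) fun y hy => hf y (Real.dist_eq y x ▸ hy)
  refine ⟨m, hfx.eventuallyEq_nhds.mono fun y hy => ?_⟩
  simpa using (((hasDerivAt_id y).const_mul m).add_const c).congr_of_eventuallyEq hy

theorem exists_eqOn_affine_of_locallyAffineAt {f : ℝ → ℝ} {s : Set ℝ} (hs : IsOpen s)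
    (hs' : IsPreconnected s) (hf : ∀ x ∈ s, LocallyAffineAt f x) :
    ∃ m c, EqOn f (fun x => m * x + c) s := by
  choose! slope hslope using fun x hx => (hf x hx).exists_eventually_hasDerivAt
  have hderiv : ∀ x ∈ s, HasDerivAt (deriv f) 0 x := fun x hx =>
    (hasDerivAt_const x (slope x)).congr_of_eventuallyEq ((hslope x hx).mono fun y hy => hy.deriv)
  obtain ⟨m, hm⟩ := hs.exists_is_const_of_deriv_eq_zero hs'
    (fun x hx => (hderiv x hx).differentiableAt.differentiableWithinAt)
    (fun x hx => (hderiv x hx).deriv)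
  obtain ⟨c, hc⟩ := hs.exists_eq_add_of_deriv_eq hs' (g := fun x => m * x)
    (fun x hx => ((hslope x hx).self_of_nhds).differentiableAt.differentiableWithinAt)
    (by fun_prop) (fun x hx => by simp [hm x hx])
  exact ⟨m, c, hc⟩

theorem IsPL.eventuallyEq_nhdsGT {f : ℝ → ℝ} {a : ℝ} (hf : IsPL f)
    (hc : ContinuousWithinAt f (Ioi a) a) (ha : f a = a) :
    ∃ m, f =ᶠ[𝓝[>] a] fun x => a + m * (x - a) := by
  have hev : ∀ᶠ x in 𝓝[>] a, LocallyAffineAt f x := by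
    have : (_ \ {a})ᶜ ∈ 𝓝 a := (Set.Finite.sdiff hf).isClosed.isOpen_compl.mem_nhds (by simp)
    filter_upwards [nhdsWithin_le_nhds this, self_mem_nhdsWithin] with x hx hxa
    by_contra hnl
    exact hx ⟨hnl, ne_of_gt hxa⟩
  obtain ⟨u, hau, hsub⟩ := mem_nhdsGT_iff_exists_Ioo_subset.1 hev
  obtain ⟨m, c, hmc⟩ := exists_eqOn_affine_of_locallyAffineAt isOpen_Ioo isPreconnected_Ioo hsub
  have heq : f =ᶠ[𝓝[>] a] fun x => m * x + c := eventually_of_mem (Ioo_mem_nhdsGT hau) hmc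
  have hfix : f a = m * a + c := tendsto_nhds_unique (hc.tendsto.congr' heq)
    (((by fun_prop : Continuous fun x : ℝ => m * x + c).tendsto a).mono_left nhdsWithin_le_nhds)
  refine ⟨m, heq.trans (Eventually.of_forall fun x => ?_)⟩
  simp only
  linarith

section StrictMonoPerm

variable {g : Equiv.Perm ℝ}

theorem strictMono_perm_inv (hg : StrictMono g) : StrictMono ⇑g⁻¹ := fun x y hxy => by
  rwa [← hg.lt_iff_lt, Equiv.Perm.coe_inv, Equiv.apply_symm_apply, Equiv.apply_symm_apply]

theorem tendsto_nhdsGT_of_strictMono (hg : StrictMono g) {a : ℝ} (ha : g a = a) :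
    Tendsto g (𝓝[>] a) (𝓝[>] a) := by
  refine tendsto_nhdsWithin_of_tendsto_nhds_of_eventually_within _ ?_
    (eventually_nhdsWithin_of_forall fun x hx => ha ▸ hg hx)
  simpa [ha] using ((hg.monotone.continuous_of_surjective g.surjective).tendsto a).mono_left
    nhdsWithin_le_nhds

theorem commutator_eventuallyEq_id {k h : Equiv.Perm ℝ} (hk : StrictMono k) (hh : StrictMono h)
    (hkPL : IsPL k) (hhPL : IsPL h) {a : ℝ} (hka : k a = a) (hha : h a = a) :
    ⇑(k⁻¹ * h * k * h⁻¹) =ᶠ[𝓝[>] a] id := by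
  obtain ⟨mk, hk'⟩ := hkPL.eventuallyEq_nhdsGT
    (hk.monotone.continuous_of_surjective k.surjective).continuousWithinAt hka
  obtain ⟨mh, hh'⟩ := hhPL.eventuallyEq_nhdsGT
    (hh.monotone.continuous_of_surjective h.surjective).continuousWithinAt hha
  have htk := tendsto_nhdsGT_of_strictMono hk hka
  have hth := tendsto_nhdsGT_of_strictMono hh hha
  have hcomm : ⇑k ∘ ⇑h =ᶠ[𝓝[>] a] ⇑h ∘ ⇑k :=
    calc ⇑k ∘ ⇑h
        _ =ᶠ[𝓝[>] a] (fun x => a + mk * (x - a)) ∘ ⇑h := hk'.comp_tendsto hth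
        _ =ᶠ[𝓝[>] a] (fun x => a + mk * (x - a)) ∘ (fun x => a + mh * (x - a)) :=
          hh'.fun_comp _
        _ = (fun x => a + mh * (x - a)) ∘ (fun x => a + mk * (x - a)) := by
          ext x; simp only [Function.comp]; ring
        _ =ᶠ[𝓝[>] a] (fun x => a + mh * (x - a)) ∘ ⇑k := (hk'.fun_comp _).symm
        _ =ᶠ[𝓝[>] a] ⇑h ∘ ⇑k := (hh'.comp_tendsto htk).symm
  have hha' : h⁻¹ a = a := by rw [Equiv.Perm.inv_eq_iff_eq, hha]
  filter_upwards [hcomm.comp_tendsto (tendsto_nhdsGT_of_strictMono (strictMono_perm_inv hh) hha')]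
    with x hx
  simp only [Function.comp, Equiv.Perm.coe_inv, Equiv.apply_symm_apply] at hx
  simp only [Equiv.Perm.mul_apply, Equiv.Perm.coe_inv, id, ← hx, Equiv.symm_apply_apply]

end StrictMonoPerm

theorem HasTransitionChain2.mono {H G : Subgroup (Equiv.Perm ℝ)} (hHG : H ≤ G)
    (hc : HasTransitionChain2 H) : HasTransitionChain2 G := by
  obtain ⟨g, hg, h, hh, rest⟩ := hc
  exact ⟨g, hHG hg, h, hHG hh, rest⟩

theorem commutator_apply_ne {α : Type*} {k h : Equiv.Perm α} {d : α} (hhd : h d = d)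
    (hkd : h (k d) ≠ k d) : (k⁻¹ * h * k * h⁻¹) d ≠ d := by
  rwa [Equiv.Perm.mul_apply, Equiv.Perm.mul_apply, Equiv.Perm.mul_apply,
    Equiv.Perm.inv_eq_iff_eq.2 hhd.symm, Ne, Equiv.Perm.inv_eq_iff_eq]

section Balanced

variable {H : Subgroup (Equiv.Perm ℝ)}

theorem exists_mem_apply_mem_Ioo (hsm : ∀ g ∈ H, StrictMono ⇑g) {a d : ℝ}
    (hfix : ∀ g ∈ H, g a = a) (had : a < d) (hd : d ∈ GSupp H) : ∃ k ∈ H, k d ∈ Ioo a d := by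
  obtain ⟨g, hg, hgd⟩ := hd
  have hga : a < g d := hfix g hg ▸ hsm g hg had
  rcases lt_or_gt_of_ne hgd with hlt | hgt
  · exact ⟨g, hg, hga, hlt⟩
  · refine ⟨g⁻¹, inv_mem hg, ?_, ?_⟩ <;>
      rw [← (hsm g hg).lt_iff_lt, Equiv.Perm.coe_inv, Equiv.apply_symm_apply]
    · rwa [hfix g hg]
    · exact hgt

theorem exists_isOrbital_Ioo_of_eventuallyEq_id {w : Equiv.Perm ℝ} (hw : Continuous w)
    {a b d : ℝ} (had : a < d) (hwd : w d ≠ d)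
    (hbdd : connectedComponentIn (Supp w) d ⊆ Ioo a b) (hid : ⇑w =ᶠ[𝓝[>] a] id) :
    ∃ r s, IsOrbital w (Ioo r s) ∧ a < r ∧ r < d ∧ d < s := by
  set C := connectedComponentIn (Supp w) d
  have hC : C = Ioo (sInf C) (sSup C) :=
    connectedComponentIn_eq_Ioo (isOpen_ne_fun hw continuous_id) hwd
      ⟨a, fun y hy => (hbdd hy).1.le⟩ ⟨b, fun y hy => (hbdd hy).2.le⟩
  have hdC : d ∈ Ioo (sInf C) (sSup C) := hC ▸ mem_connectedComponentIn hwd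
  refine ⟨sInf C, sSup C, ⟨d, hwd, hC.symm⟩, ?_, hdC.1, hdC.2⟩
  obtain ⟨u, hau, hu⟩ := mem_nhdsGT_iff_exists_Ioo_subset.1 hid
  by_contra! hr
  obtain ⟨y, hay, hy⟩ := exists_between (lt_min hau had)
  have hyC : y ∈ C := hC ▸ ⟨hr.trans_lt hay, (hy.trans_le (min_le_right _ _)).trans hdC.2⟩
  exact connectedComponentIn_subset _ _ hyC (hu ⟨hay, hy.trans_le (min_le_left _ _)⟩)

theorem right_end_eq_of_isOrbital_Ioo (hsm : ∀ g ∈ H, StrictMono ⇑g) (hpl : ∀ g ∈ H, IsPL ⇑g)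
    (hnc : ¬ HasTransitionChain2 H) {a b d : ℝ} (hA : IsGroupOrbital H (Ioo a b))
    {h : Equiv.Perm ℝ} (hh : h ∈ H) (horb : IsOrbital h (Ioo a d)) : d = b := by
  obtain ⟨x, hx, hAeq⟩ := hA
  obtain ⟨ha, hb⟩ := notMem_of_Ioo_eq_connectedComponentIn hx hAeq
  have hxab : x ∈ Ioo a b := hAeq ▸ mem_connectedComponentIn hx
  have hfix : ∀ g ∈ H, g a = a := fun g hg => by_contra fun hga => ha ⟨g, hg, hga⟩
  obtain ⟨y, hy, hheq⟩ := horb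
  have hsupp : Ioo a d ⊆ Supp h := hheq ▸ connectedComponentIn_subset _ _
  have hyad : y ∈ Ioo a d := hheq ▸ mem_connectedComponentIn hy
  have had : a < d := hyad.1.trans hyad.2
  rcases lt_trichotomy d b with hdb | rfl | hbd
  · have hdA : d ∈ connectedComponentIn (GSupp H) x := hAeq ▸ ⟨had, hdb⟩
    obtain ⟨k, hk, hkd⟩ :=
      exists_mem_apply_mem_Ioo hsm hfix had (connectedComponentIn_subset _ _ hdA)
    have hw : k⁻¹ * h * k * h⁻¹ ∈ H := mul_mem (mul_mem (mul_mem (inv_mem hk) hh) hk) (inv_mem hh)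
    have hwd : (k⁻¹ * h * k * h⁻¹) d ≠ d := commutator_apply_ne
      (not_not.1 (notMem_of_Ioo_eq_connectedComponentIn hy hheq).2) (hsupp hkd)
    have hbdd : connectedComponentIn (Supp ⇑(k⁻¹ * h * k * h⁻¹)) d ⊆ Ioo a b := by
      rw [hAeq, connectedComponentIn_eq hdA]
      exact connectedComponentIn_mono d fun z hz => ⟨_, hw, hz⟩
    obtain ⟨r, s, hwo, har, hrd, hds⟩ := exists_isOrbital_Ioo_of_eventuallyEq_id
      ((hsm _ hw).monotone.continuous_of_surjective (Equiv.surjective _)) had hwd hbdd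
      (commutator_eventuallyEq_id (hsm k hk) (hsm h hh) (hpl k hk) (hpl h hh) (hfix k hk)
        (hfix h hh))
    exact absurd ⟨h, hh, _, hw, a, r, d, s, ⟨y, hy, hheq⟩, hwo, har, hrd, hds⟩ hnc
  · rfl
  · exact absurd ⟨h, hh, hsupp ⟨hxab.1.trans hxab.2, hbd⟩⟩ hb

end Balanced

section Reflection

def reflect : Equiv.Perm ℝ ≃* Equiv.Perm ℝ := MulAut.conj (Equiv.neg ℝ)

@[simp]
theorem reflect_apply (g : Equiv.Perm ℝ) (x : ℝ) : reflect g x = -g (-x) := rfl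

variable {g : Equiv.Perm ℝ} {H : Subgroup (Equiv.Perm ℝ)}

theorem supp_reflect : Supp (reflect g) = -Supp g := by
  ext x
  simp [Supp, neg_eq_iff_eq_neg]

theorem isOrbital_reflect_iff {A : Set ℝ} : IsOrbital (reflect g) A ↔ IsOrbital g (-A) := by
  rw [IsOrbital, IsOrbital, supp_reflect, exists_eq_connectedComponentIn_neg_iff]

theorem strictMono_reflect (hg : StrictMono g) : StrictMono (reflect g) := fun x y hxy => by
  simpa using hg (neg_lt_neg hxy)

theorem LocallyAffineAt.reflect {x : ℝ} (hg : LocallyAffineAt g (-x)) :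
    LocallyAffineAt (reflect g) x := by
  obtain ⟨ε, hε, m, c, hf⟩ := hg
  refine ⟨ε, hε, m, -c, fun y hy => ?_⟩
  rw [reflect_apply, hf (-y) (by rwa [neg_sub_neg, abs_sub_comm])]
  ring

theorem isPL_reflect (hg : IsPL g) : IsPL (reflect g) :=
  hg.neg.subset fun _ hx => mt LocallyAffineAt.reflect hx

theorem gSupp_map_reflect : GSupp (H.map reflect.toMonoidHom) = -GSupp H := by
  ext x
  simp [GSupp, neg_eq_iff_eq_neg]

theorem isGroupOrbital_map_reflect_iff {A : Set ℝ} :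
    IsGroupOrbital (H.map reflect.toMonoidHom) A ↔ IsGroupOrbital H (-A) := by
  rw [IsGroupOrbital, IsGroupOrbital, gSupp_map_reflect, exists_eq_connectedComponentIn_neg_iff]

theorem HasTransitionChain2.of_map_reflect (hc : HasTransitionChain2 (H.map reflect.toMonoidHom)) :
    HasTransitionChain2 H := by
  obtain ⟨_, ⟨g, hg, rfl⟩, _, ⟨h, hh, rfl⟩, a₁, b₁, a₂, b₂, hgo, hho, h₁, h₂, h₃⟩ := hc
  rw [MulEquiv.coe_toMonoidHom, isOrbital_reflect_iff, neg_Ioo] at hgo hho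
  exact ⟨h, hh, g, hg, -b₂, -a₂, -b₁, -a₁, hho, hgo, neg_lt_neg h₃, neg_lt_neg h₂, neg_lt_neg h₁⟩

end Reflection

theorem stmt8 (G H : Subgroup (Equiv.Perm ℝ)) (hG : ∀ g ∈ G, PLHomeo g)
    (hnc : ¬ HasTransitionChain2 G) (hHG : H ≤ G) (a b : ℝ)
    (hA : IsGroupOrbital H (Set.Ioo a b)) (h : Equiv.Perm ℝ) (hh : h ∈ H) :
    ((∃ d, Set.Ioo a d ⊆ Set.Ioo a b ∧ IsOrbital ⇑h (Set.Ioo a d)) →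
      ∃ c, Set.Ioo c b ⊆ Set.Ioo a b ∧ IsOrbital ⇑h (Set.Ioo c b)) ∧
    ((∃ c, Set.Ioo c b ⊆ Set.Ioo a b ∧ IsOrbital ⇑h (Set.Ioo c b)) →
      ∃ d, Set.Ioo a d ⊆ Set.Ioo a b ∧ IsOrbital ⇑h (Set.Ioo a d)) := by
  have hsm : ∀ g ∈ H, StrictMono ⇑g := fun g hg => (hG g (hHG hg)).1.1
  have hpl : ∀ g ∈ H, IsPL ⇑g := fun g hg => (hG g (hHG hg)).2
  have hncH : ¬ HasTransitionChain2 H := fun hc => hnc (hc.mono hHG)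
  constructor
  · rintro ⟨d, -, horb⟩
    obtain rfl := right_end_eq_of_isOrbital_Ioo hsm hpl hncH hA hh horb
    exact ⟨a, subset_rfl, horb⟩
  · rintro ⟨c, -, horb⟩
    have hc : -c = -a := right_end_eq_of_isOrbital_Ioo (H := H.map reflect.toMonoidHom) (a := -b)
      (by rintro _ ⟨g, hg, rfl⟩; exact strictMono_reflect (hsm g hg))
      (by rintro _ ⟨g, hg, rfl⟩; exact isPL_reflect (hpl g hg))
      (fun hc => hncH hc.of_map_reflect)
      (by rwa [isGroupOrbital_map_reflect_iff, neg_Ioo, neg_neg, neg_neg])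
      (Subgroup.mem_map_of_mem _ hh)
      (by rwa [MulEquiv.coe_toMonoidHom, isOrbital_reflect_iff, neg_Ioo, neg_neg, neg_neg])
    obtain rfl := neg_injective hc
    exact ⟨b, subset_rfl, horb⟩
end

section
/- In a standard restricted wreath product C ≀ T with T torsion-free and C non-trivial, no non-trivial element of the base group commutes with any non-trivial element of the top group; consequently, for non-trivial b in the base group and non-trivial t in the top group, [[b,t],t] is a non-trivial element of the base group. -/
noncomputable def shiftAddAut (C T : Type) [Group C] [Group T] (t : T) :
    (T →₀ Additive C) ≃+ (T →₀ Additive C) :=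
  { Finsupp.equivCongrLeft (Equiv.mulLeft t) with
    map_add' := fun f g => by ext x; simp [Finsupp.equivCongrLeft] }

noncomputable def wrAction (C T : Type) [Group C] [Group T] :
    T →* MulAut (Multiplicative (T →₀ Additive C)) where
  toFun t := AddEquiv.toMultiplicative (shiftAddAut C T t)
  map_one' := by
    ext f : 1
    refine Finsupp.ext fun x => ?_
    change f (1⁻¹ * x) = f x
    simp
  map_mul' := fun s t => by
    ext f : 1
    refine Finsupp.ext fun x => ?_
    change f ((s * t)⁻¹ * x) = f (t⁻¹ * (s⁻¹ * x))
    simp [mul_inv_rev, mul_assoc]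

noncomputable abbrev Wr (C T : Type) [Group C] [Group T] :=
  SemidirectProduct (Multiplicative (T →₀ Additive C)) T (wrAction C T)

def Monoid.IsTorsionFree (G : Type*) [Monoid G] : Prop :=
  ∀ g : G, g ≠ 1 → ¬IsOfFinOrder g

/-!
A base element `b` commutes with the top element `t` exactly when `t` fixes `b`, i.e. when `b` is
constant on the right cosets of `⟨t⟩`. If `t` has infinite order these cosets are infinite, so a
finitely supported `b` must vanish. Since `⁅inl b, inr t⁆ = inl (b * (t·b)⁻¹)`, the first
assertion applied twice shows that `⁅⁅b, t⁆, t⁆` is a non-trivial base element.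
-/

open scoped commutatorElement

namespace SemidirectProduct

variable {N G : Type*} [Group N] [Group G] {φ : G →* MulAut N}

theorem commutatorElement_inl_inr (n : N) (g : G) :
    ⁅(inl n : N ⋊[φ] G), (inr g : N ⋊[φ] G)⁆ = inl (n * (φ g n)⁻¹) := by
  rw [map_mul, ← map_inv, inl_aut, commutatorElement_def, map_inv, map_inv]
  simp only [mul_assoc]

theorem commute_inl_inr_iff {n : N} {g : G} :
    Commute (inl n : N ⋊[φ] G) (inr g) ↔ φ g n = n := by
  rw [← commutatorElement_eq_one_iff_commute, commutatorElement_inl_inr, map_eq_one_iff _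
    inl_injective, mul_inv_eq_one, eq_comm]

end SemidirectProduct

theorem Finsupp.eq_zero_of_forall_apply_mul_left_eq {G M : Type*} [Group G] [Zero M] {t : G}
    (ht : ¬IsOfFinOrder t) {f : G →₀ M} (hf : ∀ x, f (t * x) = f x) : f = 0 := by
  by_contra hne
  obtain ⟨x, hx⟩ := Finsupp.support_nonempty_iff.2 hne
  have orbit_mem : ∀ n : ℕ, t ^ n * x ∈ (f.support : Set G) := by
    intro n
    induction n with
    | zero => simpa using hx
    | succ n ih => simpa [pow_succ', mul_assoc, hf] using ih
  have orbit_injective : Function.Injective fun n : ℕ => t ^ n * x :=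
    (mul_left_injective x).comp (injective_pow_iff_not_isOfFinOrder.2 ht)
  exact Set.infinite_of_injective_forall_mem orbit_injective orbit_mem f.support.finite_toSet

section WreathProduct

variable {C T : Type} [Group C] [Group T]

@[simp]
theorem wrAction_apply_toAdd (t : T) (b : Multiplicative (T →₀ Additive C)) (x : T) :
    (wrAction C T t b).toAdd x = b.toAdd (t⁻¹ * x) := by
  simp [wrAction, shiftAddAut, Finsupp.equivCongrLeft, Finsupp.equivMapDomain_apply]

theorem eq_one_of_wrAction_eq_self {t : T} (ht : ¬IsOfFinOrder t)
    {b : Multiplicative (T →₀ Additive C)} (hb : wrAction C T t b = b) : b = 1 :=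
  Finsupp.eq_zero_of_forall_apply_mul_left_eq (isOfFinOrder_inv_iff.not.2 ht) fun x => by
    change b.toAdd (t⁻¹ * x) = b.toAdd x
    rw [← wrAction_apply_toAdd, hb]

end WreathProduct

theorem stmt19_general (C T : Type) [Group C] [Group T]
    (hT : Monoid.IsTorsionFree T)
    (b : Multiplicative (T →₀ Additive C)) (t : T) (hb : b ≠ 1) (ht : t ≠ 1) :
    ¬ Commute ((SemidirectProduct.inl b : Wr C T)) (SemidirectProduct.inr t) ∧
    ∃ b' : Multiplicative (T →₀ Additive C), b' ≠ 1 ∧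
      ⁅(⁅(SemidirectProduct.inl b : Wr C T), SemidirectProduct.inr t⁆ : Wr C T),
          (SemidirectProduct.inr t : Wr C T)⁆ = SemidirectProduct.inl b' := by
  have not_fixed : ∀ n, n ≠ 1 → wrAction C T t n ≠ n :=
    fun n hn hfix => hn (eq_one_of_wrAction_eq_self (hT t ht) hfix)
  have commutator_ne_one : ∀ n, n ≠ 1 → n * (wrAction C T t n)⁻¹ ≠ 1 := fun n hn => by
    rw [Ne, mul_inv_eq_one, eq_comm]
    exact not_fixed n hn
  refine ⟨SemidirectProduct.commute_inl_inr_iff.not.2 (not_fixed b hb), _,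
    commutator_ne_one _ (commutator_ne_one b hb), ?_⟩
  rw [SemidirectProduct.commutatorElement_inl_inr, SemidirectProduct.commutatorElement_inl_inr]

theorem stmt19 (C T : Type) [Group C] [Group T] (hC : Nontrivial C)
    (hT : Monoid.IsTorsionFree T)
    (b : Multiplicative (T →₀ Additive C)) (t : T) (hb : b ≠ 1) (ht : t ≠ 1) :
    ¬ Commute ((SemidirectProduct.inl b : Wr C T)) (SemidirectProduct.inr t) ∧
    ∃ b' : Multiplicative (T →₀ Additive C), b' ≠ 1 ∧
      ⁅(⁅(SemidirectProduct.inl b : Wr C T), SemidirectProduct.inr t⁆ : Wr C T),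
          (SemidirectProduct.inr t : Wr C T)⁆ = SemidirectProduct.inl b' :=
  stmt19_general C T hT b t hb ht
end
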